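/- For every integer n ≥ 5, every real c ≥ 1, and every x ∈ [−c, c], one has | |x| − c·A_n(x/c) | ≤ 3·c·exp(−√n). -/

import Mathlib

/-- `newmanAlpha n = exp(-1/√n)`. -/
noncomputable def newmanAlpha (n : ℕ) : ℝ := Real.exp (-1 / Real.sqrt n)

/-- The Newman polynomial `N_n(t) = ∏_{i=1}^{n-1} (t + α_n^i)`. -/
noncomputable def newmanPoly (n : ℕ) (t : ℝ) : ℝ :=
  ∏ i ∈ Finset.Icc 1 (n - 1), (t + (newmanAlpha n) ^ i)

/-- The Newman approximant `A_n(t) = t (N_n(t) - N_n(-t)) / (N_n(t) + N_n(-t))`. -/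
noncomputable def newmanApprox (n : ℕ) (t : ℝ) : ℝ :=
  t * (newmanPoly n t - newmanPoly n (-t)) / (newmanPoly n t + newmanPoly n (-t))

/-!
For `t ∈ [e^{-√n}, 1]` choose `k` with `α^{k+1} ≤ t ≤ α^k`. Then every factor satisfies
`|α^i - t| / (α^i + t) ≤ (1 - vᵢ) / (1 + vᵢ) ≤ e^{-2vᵢ}` with `vᵢ = α^{max(k+1-i, i-k)}`, and the `vᵢ`
dominate `α, α², …, α^{n-1}`, whose sum is at least `√n / 2`. Hence `|N_n(-t)| ≤ e^{-√n} N_n(t)`, and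
`t - A_n(t) = 2t N_n(-t) / (N_n(t) + N_n(-t))` is at most `3e^{-√n}`. For `t ≤ e^{-√n}` all factors of
`N_n(-t)` are nonnegative, so `0 ≤ A_n(t) ≤ t`. Evenness of `A_n` and scaling by `c` give the theorem.
-/

open Real Finset

lemma one_sub_le_one_add_mul_exp_neg_two_mul {v : ℝ} (hv : 0 ≤ v) :
    1 - v ≤ (1 + v) * exp (-2 * v) := by
  rcases le_or_gt 1 v with hv1 | hv1
  · nlinarith [exp_pos (-2 * v)]
  -- `log (1 + v) - log (1 - v) = 2 (v + v³/3 + v⁵/5 + ⋯) ≥ 2 v`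
  have hlog : 2 * v ≤ log (1 + v) - log (1 - v) := by
    have hsum := hasSum_log_sub_log_of_abs_lt_one (x := v) (by rwa [abs_of_nonneg hv])
    simpa using le_hasSum hsum 0 fun j _ => by positivity
  have hexp : (1 - v) * exp (2 * v) ≤ 1 + v :=
    calc (1 - v) * exp (2 * v) ≤ (1 - v) * exp (log (1 + v) - log (1 - v)) := by
          gcongr
      _ = 1 + v := by
          rw [exp_sub, exp_log (by linarith), exp_log (by linarith)]
          field_simp [(by linarith : (1 - v) ≠ 0)]
  calc 1 - v = (1 - v) * exp (2 * v) * exp (-2 * v) := by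
        rw [mul_assoc, ← exp_add]; simp
    _ ≤ (1 + v) * exp (-2 * v) := by gcongr

lemma exp_neg_le_sub_one_div {s : ℝ} (hs : 2 ≤ s) : exp (-s) ≤ (s - 1) / (2 * s + 1) := by
  rw [exp_neg, ← one_div, div_le_div_iff₀ (exp_pos s) (by linarith)]
  have hquad : (s - 1) * (1 + s + s ^ 2 / 2) ≤ (s - 1) * exp s := by
    gcongr
    · linarith
    · exact quadratic_le_exp_of_nonneg (by linarith)
  nlinarith [mul_nonneg (mul_nonneg (by linarith : (0 : ℝ) ≤ s + 1) (by linarith : (0 : ℝ) ≤ s - 2))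
    (by linarith : (0 : ℝ) ≤ s + 2)]

lemma abs_sub_le_add_mul_exp {a b v : ℝ} (hv : 0 ≤ v) (ha : 0 ≤ a) (hb : 0 ≤ b)
    (hab : v * a ≤ b) (hba : v * b ≤ a) : |a - b| ≤ (a + b) * exp (-2 * v) := by
  have hratio : |a - b| * (1 + v) ≤ (a + b) * (1 - v) := by
    rcases le_total a b with h | h
    · rw [abs_of_nonpos (by linarith)]; nlinarith
    · rw [abs_of_nonneg (by linarith)]; nlinarith
  refine le_of_mul_le_mul_right ?_ (by linarith : 0 < 1 + v)
  calc |a - b| * (1 + v) ≤ (a + b) * (1 - v) := hratio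
    _ ≤ (a + b) * ((1 + v) * exp (-2 * v)) := by
        gcongr
        exact one_sub_le_one_add_mul_exp_neg_two_mul hv
    _ = (a + b) * exp (-2 * v) * (1 + v) := by ring

lemma exists_pow_succ_le_le_pow {M : Type*} [Monoid M] [LinearOrder M] (a t : M) (m : ℕ)
    (hlo : a ^ (m + 1) ≤ t) (hhi : t ≤ 1) : ∃ k ≤ m, a ^ (k + 1) ≤ t ∧ t ≤ a ^ k := by
  induction m with
  | zero => exact ⟨0, le_rfl, hlo, by simpa using hhi⟩
  | succ m ih =>
    rcases le_or_gt t (a ^ (m + 1)) with h | h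
    · exact ⟨m + 1, le_rfl, hlo, h⟩
    · obtain ⟨k, hk, hkt⟩ := ih h.le
      exact ⟨k, by omega, hkt⟩

lemma pow_max_sub_mul_le {α t : ℝ} {k : ℕ} (h0 : 0 ≤ α) (h1 : α ≤ 1)
    (hlo : α ^ (k + 1) ≤ t) (hhi : t ≤ α ^ k) (i : ℕ) :
    α ^ max (k + 1 - i) (i - k) * α ^ i ≤ t ∧ α ^ max (k + 1 - i) (i - k) * t ≤ α ^ i := by
  have ht : 0 ≤ t := (pow_nonneg h0 _).trans hlo
  rcases le_or_gt i k with hik | hik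
  · rw [max_eq_left (by omega), ← pow_add, Nat.sub_add_cancel (by omega)]
    refine ⟨hlo, ?_⟩
    calc α ^ (k + 1 - i) * t ≤ 1 * α ^ k := by gcongr; exact pow_le_one₀ h0 h1
      _ ≤ α ^ i := by rw [one_mul]; exact pow_le_pow_of_le_one h0 h1 hik
  · rw [max_eq_right (by omega)]
    constructor
    · calc α ^ (i - k) * α ^ i ≤ 1 * α ^ (k + 1) :=
            mul_le_mul (pow_le_one₀ h0 h1) (pow_le_pow_of_le_one h0 h1 hik) (by positivity) zero_le_one
        _ ≤ t := by rwa [one_mul]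
    · calc α ^ (i - k) * t ≤ α ^ (i - k) * α ^ k := by gcongr
        _ = α ^ i := by rw [← pow_add, Nat.sub_add_cancel hik.le]

lemma Antitone.sum_Icc_le_sum_Icc_max_sub {f : ℕ → ℝ} (hf : Antitone f) {k m : ℕ} (hkm : k ≤ m) :
    ∑ i ∈ Icc 1 m, f i ≤ ∑ i ∈ Icc 1 m, f (max (k + 1 - i) (i - k)) := by
  rw [show Icc 1 m = Ioc 0 m from Icc_add_one_left_eq_Ioc 0 m,
    ← sum_Ioc_consecutive _ (Nat.zero_le k) hkm, ← sum_Ioc_consecutive _ (Nat.zero_le k) hkm]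
  -- on `(0, k]` the exponents are `k, k - 1, …, 1`; on `(k, m]` they are `i - k ≤ i`
  have hreflect : ∑ i ∈ Ioc 0 k, f i = ∑ i ∈ Ioc 0 k, f (max (k + 1 - i) (i - k)) := by
    refine sum_nbij' (k + 1 - ·) (k + 1 - ·) ?_ ?_ ?_ ?_ ?_ <;> intro i hi <;>
      simp only [mem_Ioc] at hi ⊢
    · omega
    · omega
    · omega
    · omega
    · congr 1; omega
  refine add_le_add hreflect.le (sum_le_sum fun i hi => hf ?_)
  simp only [mem_Ioc] at hi
  omega

lemma two_le_sqrt_of_four_le {n : ℕ} (hn : 4 ≤ n) : 2 ≤ √(n : ℝ) :=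
  (le_sqrt zero_le_two (Nat.cast_nonneg n)).2 (by norm_num; exact_mod_cast hn)

lemma newmanAlpha_pos (n : ℕ) : 0 < newmanAlpha n := exp_pos _

lemma newmanAlpha_le_one (n : ℕ) : newmanAlpha n ≤ 1 :=
  exp_le_one_iff.2 (div_nonpos_of_nonpos_of_nonneg (by norm_num) (sqrt_nonneg _))

lemma newmanAlpha_pow_self (n : ℕ) : newmanAlpha n ^ n = exp (-√(n : ℝ)) := by
  rw [newmanAlpha, ← exp_nat_mul, mul_div_assoc', mul_neg_one, neg_div, div_sqrt]

lemma sqrt_le_two_mul_sum_newmanAlpha_pow {n : ℕ} (hn : 4 ≤ n) :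
    √(n : ℝ) ≤ 2 * ∑ i ∈ Icc 1 (n - 1), newmanAlpha n ^ i := by
  set s := √(n : ℝ)
  set α := newmanAlpha n
  have hs : 2 ≤ s := two_le_sqrt_of_four_le hn
  -- `α = e^{-2v}` with `v = 1/(2s)`
  have hα : 2 * s - 1 ≤ (2 * s + 1) * α := by
    have h := one_sub_le_one_add_mul_exp_neg_two_mul (v := 1 / (2 * s)) (by positivity)
    rw [show -2 * (1 / (2 * s)) = -1 / s by field_simp] at h
    have h2s : (0 : ℝ) < 2 * s := by linarith
    calc 2 * s - 1 = 2 * s * (1 - 1 / (2 * s)) := by field_simp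
      _ ≤ 2 * s * ((1 + 1 / (2 * s)) * α) := by gcongr; exact h
      _ = (2 * s + 1) * α := by field_simp
  have hρ := exp_neg_le_sub_one_div hs
  rw [le_div_iff₀ (by linarith)] at hρ
  have hα1 : α < 1 := exp_lt_one_iff.2 (div_neg_of_neg_of_pos (by norm_num) (by linarith))
  have hgeom : (1 - α) * ∑ i ∈ Icc 1 (n - 1), α ^ i = α - exp (-s) := by
    rw [← newmanAlpha_pow_self, ← Ico_add_one_right_eq_Icc, Nat.sub_add_cancel (by omega),
      mul_comm, ← neg_sub α 1, mul_neg, geom_sum_Ico_mul α (by omega), pow_one, neg_sub]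
  refine le_of_mul_le_mul_left ?_ (sub_pos.2 hα1)
  rw [mul_left_comm, hgeom]
  -- `(s + 2)(2s - 1) = (2s + 1)s + 2(s - 1)`, so `hα` and `hρ` combine with no loss
  nlinarith

lemma abs_newmanPoly_neg_le {n : ℕ} (hn : 4 ≤ n) {t : ℝ} (hlo : exp (-√(n : ℝ)) ≤ t)
    (hhi : t ≤ 1) : |newmanPoly n (-t)| ≤ exp (-√(n : ℝ)) * newmanPoly n t := by
  set α := newmanAlpha n
  have hα0 := (newmanAlpha_pos n).le
  have hα1 := newmanAlpha_le_one n
  obtain ⟨k, hk, hkt, htk⟩ := exists_pow_succ_le_le_pow α t (n - 1)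
    (by rwa [Nat.sub_add_cancel (by omega), newmanAlpha_pow_self]) hhi
  set v : ℕ → ℝ := fun i => α ^ max (k + 1 - i) (i - k)
  have hfactor (i : ℕ) : |-t + α ^ i| ≤ (t + α ^ i) * exp (-2 * v i) := by
    obtain ⟨hvα, hvt⟩ := pow_max_sub_mul_le hα0 hα1 hkt htk i
    rw [neg_add_eq_sub, abs_sub_comm]
    exact abs_sub_le_add_mul_exp (pow_nonneg hα0 _) ((pow_nonneg hα0 _).trans hkt)
      (pow_nonneg hα0 _) hvt hvα
  have hsum : √(n : ℝ) ≤ 2 * ∑ i ∈ Icc 1 (n - 1), v i :=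
    (sqrt_le_two_mul_sum_newmanAlpha_pow hn).trans <| mul_le_mul_of_nonneg_left
      ((pow_right_anti₀ hα0 hα1).sum_Icc_le_sum_Icc_max_sub hk) zero_le_two
  have hN : 0 ≤ newmanPoly n t :=
    prod_nonneg fun i _ => add_nonneg ((pow_nonneg hα0 _).trans hkt) (pow_nonneg hα0 _)
  calc |newmanPoly n (-t)| = ∏ i ∈ Icc 1 (n - 1), |-t + α ^ i| := abs_prod _ _
    _ ≤ ∏ i ∈ Icc 1 (n - 1), (t + α ^ i) * exp (-2 * v i) :=
        prod_le_prod (fun _ _ => abs_nonneg _) fun i _ => hfactor i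
    _ = exp (-2 * ∑ i ∈ Icc 1 (n - 1), v i) * newmanPoly n t := by
        rw [prod_mul_distrib, mul_sum, exp_sum, mul_comm, newmanPoly]
    _ ≤ exp (-√(n : ℝ)) * newmanPoly n t := by gcongr; linarith

lemma newmanPoly_pos (n : ℕ) {t : ℝ} (ht : 0 ≤ t) : 0 < newmanPoly n t :=
  prod_pos fun i _ => add_pos_of_nonneg_of_pos ht (pow_pos (newmanAlpha_pos n) i)

lemma newmanPoly_neg_mem_Icc (n : ℕ) {t : ℝ} (ht0 : 0 ≤ t) (ht : t ≤ exp (-√(n : ℝ))) :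
    newmanPoly n (-t) ∈ Set.Icc 0 (newmanPoly n t) := by
  have hfactor : ∀ i ∈ Icc 1 (n - 1), 0 ≤ -t + newmanAlpha n ^ i := fun i hi => by
    rw [← newmanAlpha_pow_self] at ht
    have := pow_le_pow_of_le_one (newmanAlpha_pos n).le (newmanAlpha_le_one n)
      (by simp only [mem_Icc] at hi; omega : i ≤ n)
    linarith
  exact ⟨prod_nonneg hfactor, prod_le_prod hfactor fun _ _ => by linarith⟩

lemma newmanApprox_neg (n : ℕ) (t : ℝ) : newmanApprox n (-t) = newmanApprox n t := by
  rw [newmanApprox, newmanApprox, neg_neg]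
  ring

lemma abs_sub_mul_sub_div_add_le_self {P Q t : ℝ} (hQ : 0 ≤ Q) (hQP : Q ≤ P) (ht : 0 ≤ t) :
    |t - t * (P - Q) / (P + Q)| ≤ t := by
  have h0 : 0 ≤ (P - Q) / (P + Q) := div_nonneg (by linarith) (by linarith)
  have h1 : (P - Q) / (P + Q) ≤ 1 := div_le_one_of_le₀ (by linarith) (by linarith)
  rw [mul_div_assoc, abs_le]
  constructor <;> nlinarith

lemma abs_sub_mul_sub_div_add_le {P Q t ε : ℝ} (hP : 0 < P) (hQ : |Q| ≤ ε * P) (hε : ε ≤ 1 / 3) :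
    |t - t * (P - Q) / (P + Q)| ≤ 3 * ε * |t| := by
  have hε0 : 0 ≤ ε := nonneg_of_mul_nonneg_left ((abs_nonneg Q).trans hQ) hP
  have hPQ : (1 - ε) * P ≤ P + Q := by linarith [neg_abs_le Q]
  have hPQ0 : 0 < P + Q := by nlinarith
  rw [show t - t * (P - Q) / (P + Q) = 2 * (t * Q) / (P + Q) by field_simp; ring, abs_div,
    abs_of_pos hPQ0, abs_mul, abs_mul, div_le_iff₀ hPQ0, abs_two]
  calc 2 * (|t| * |Q|) ≤ 2 * (|t| * (ε * P)) := by gcongr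
    _ ≤ 3 * ε * |t| * ((1 - ε) * P) := by
        have : 0 ≤ |t| * ε * P := by positivity
        nlinarith
    _ ≤ 3 * ε * |t| * (P + Q) := by gcongr

lemma abs_sub_newmanApprox_le_of_mem_Icc {n : ℕ} (hn : 4 ≤ n) {t : ℝ} (ht : t ∈ Set.Icc 0 1) :
    |t - newmanApprox n t| ≤ 3 * exp (-√(n : ℝ)) := by
  obtain ⟨ht0, ht1⟩ := ht
  set ρ := exp (-√(n : ℝ))
  have hρ : ρ ≤ 1 / 3 := by
    calc ρ ≤ exp (-2) := exp_le_exp.2 (neg_le_neg (two_le_sqrt_of_four_le hn))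
      _ ≤ 1 / 3 := by
        rw [exp_neg, inv_eq_one_div]
        gcongr
        linarith [quadratic_le_exp_of_nonneg zero_le_two]
  rcases le_total t ρ with hsmall | hlarge
  · obtain ⟨hQ, hQP⟩ := newmanPoly_neg_mem_Icc n ht0 hsmall
    calc |t - newmanApprox n t| ≤ t := abs_sub_mul_sub_div_add_le_self hQ hQP ht0
      _ ≤ 3 * ρ := by linarith [exp_pos (-√(n : ℝ))]
  · calc |t - newmanApprox n t| ≤ 3 * ρ * |t| :=
          abs_sub_mul_sub_div_add_le (newmanPoly_pos n ht0) (abs_newmanPoly_neg_le hn hlarge ht1) hρ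
      _ ≤ 3 * ρ := by
          rw [abs_of_nonneg ht0]
          exact mul_le_of_le_one_right (by positivity) ht1

/-- Lemma 1 (σ = 0): rational approximation of `|x|` on `[-c, c]`. -/
theorem abs_sub_newmanApprox_le (n : ℕ) (hn : 5 ≤ n) (c : ℝ) (hc : 1 ≤ c)
    (x : ℝ) (hx : x ∈ Set.Icc (-c) c) :
    |(|x| : ℝ) - c * newmanApprox n (x / c)| ≤ 3 * c * Real.exp (-Real.sqrt n) := by
  have hc0 : 0 < c := by linarith
  have hxc : |x / c| ∈ Set.Icc 0 1 :=
    ⟨abs_nonneg _, by rw [abs_div, abs_of_pos hc0, div_le_one hc0, abs_le]; exact hx⟩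
  have heven : newmanApprox n (x / c) = newmanApprox n |x / c| :=
    abs_by_cases (fun u => newmanApprox n (x / c) = newmanApprox n u) rfl
      (newmanApprox_neg n _).symm
  calc |(|x| : ℝ) - c * newmanApprox n (x / c)| = c * |(|x / c|) - newmanApprox n (|x / c|)| := by
        have hscale : |x| = c * |x / c| := by rw [abs_div, abs_of_pos hc0, mul_div_cancel₀ _ hc0.ne']
        rw [heven, hscale, ← mul_sub, abs_mul, abs_of_pos hc0]
    _ ≤ c * (3 * exp (-√(n : ℝ))) := by
        gcongr; exact abs_sub_newmanApprox_le_of_mem_Icc (by omega) hxc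
    _ = 3 * c * exp (-√(n : ℝ)) := by ring
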